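/- lim_{k→∞} g_k(η_k) = 2 and lim_{k→∞} ψ_k(η_k) = 2, where ψ_k(η_k) = −η_k·Δ_k′(η_k). -/

import Mathlib

open Filter Set

/-- `C_k = (2k-2)!/(k-1)!` as a real number. -/
noncomputable def Cc (k : ℕ) : ℝ :=
  ((2 * k - 2).factorial : ℝ) / ((k - 1).factorial : ℝ)

/-- `p_k(z) = 1 − 2z − (7+8k)z²`. -/
noncomputable def Pp (k : ℕ) (z : ℝ) : ℝ := 1 - 2 * z - (7 + 8 * k) * z ^ 2

/-- `h_k(z) = 1 − z − C_k·z^{2k+1}`. -/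
noncomputable def Hh (k : ℕ) (z : ℝ) : ℝ := 1 - z - Cc k * z ^ (2 * k + 1)

/-- `Δ_k(z) = p_k(z) + 4·C_k·z^{2k+1}·h_k(z)`. -/
noncomputable def Dd (k : ℕ) (z : ℝ) : ℝ :=
  Pp k z + 4 * Cc k * z ^ (2 * k + 1) * Hh k z

/-- `g_k(z) = 2 − C_k·z^{2k−1}·(h_k(z) − C_k·z^{2k−1})`. -/
noncomputable def Gg (k : ℕ) (z : ℝ) : ℝ :=
  2 - Cc k * z ^ (2 * k - 1) * (Hh k z - Cc k * z ^ (2 * k - 1))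

/-- `ρ_k = 1/(1+√(8+8k))`, the positive root of `p_k`. -/
noncomputable def rho (k : ℕ) : ℝ := 1 / (1 + Real.sqrt (8 + 8 * k))

/-- `ψ_k(x) = −x·Δ_k′(x)`. -/
noncomputable def psi (k : ℕ) (x : ℝ) : ℝ := -x * deriv (Dd k) x

/-- `η` is a root of `Δ_k` in the interval `(0, 1/√(8+8k))`, and is the unique such root. -/
def IsEta (k : ℕ) (η : ℝ) : Prop :=
  η ∈ Set.Ioo (0 : ℝ) (1 / Real.sqrt (8 + 8 * k)) ∧ Dd k η = 0 ∧
    ∀ x ∈ Set.Ioo (0 : ℝ) (1 / Real.sqrt (8 + 8 * k)), Dd k x = 0 → x = η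

/-!
Since `η_k² < 1/(8k+8)` and `C_k = (2k−2)⋯k ≤ (2k)^{k−1}`, the quantity `u_k = C_k·η_k^{2k−1}`
is at most `4^{1−k}`; so `u_k → 0`, and `η_k → 0`. For `k ≥ 1`, `h_k`, `Δ_k`, `g_k` and `ψ_k` at
`η_k` are polynomials in `η_k`, `u_k` and `k·η_k²`. The root equation `Δ_k(η_k) = 0` then forces
`(7+8k)·η_k² → 1`, whence `g_k(η_k) = 2 − u_k(h_k(η_k) − u_k) → 2` and
`ψ_k(η_k) = 2η_k + 2(7+8k)η_k² + O(u_k) → 2`.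
-/

open scoped Topology

lemma Cc_eq_descFactorial (k : ℕ) : Cc k = ((2 * k - 2).descFactorial (k - 1) : ℝ) := by
  have h := Nat.factorial_mul_descFactorial (n := 2 * k - 2) (k := k - 1) (by omega)
  rw [show 2 * k - 2 - (k - 1) = k - 1 by omega] at h
  rw [Cc, ← h, Nat.cast_mul, mul_div_cancel_left₀ _ (by positivity)]

lemma Cc_nonneg (k : ℕ) : 0 ≤ Cc k := by
  rw [Cc_eq_descFactorial]; positivity

lemma Cc_le_pow (k : ℕ) : Cc k ≤ (2 * k : ℝ) ^ (k - 1) := by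
  rw [Cc_eq_descFactorial]
  calc ((2 * k - 2).descFactorial (k - 1) : ℝ) ≤ ((2 * k - 2 : ℕ) : ℝ) ^ (k - 1) := by
        exact_mod_cast Nat.descFactorial_le_pow _ _
    _ ≤ (2 * k : ℝ) ^ (k - 1) := by gcongr; norm_cast; omega

noncomputable def Uu (k : ℕ) (z : ℝ) : ℝ := Cc k * z ^ (2 * k - 1)

lemma Uu_nonneg (k : ℕ) {x : ℝ} (hx : 0 ≤ x) : 0 ≤ Uu k x :=
  mul_nonneg (Cc_nonneg k) (pow_nonneg hx _)

lemma Uu_le_geom {k : ℕ} (hk : 1 ≤ k) {x : ℝ} (hx : 0 ≤ x) (hkx : 8 * k * x ^ 2 ≤ 1) :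
    Uu k x ≤ (1 / 4) ^ (k - 1) := by
  have hk' : (1 : ℝ) ≤ k := by exact_mod_cast hk
  have hx1 : x ≤ 1 := by nlinarith
  have hpow : x ^ (2 * k - 1) = (x ^ 2) ^ (k - 1) * x := by
    rw [← pow_mul, ← pow_succ]; congr 1; omega
  calc Uu k x ≤ (2 * k : ℝ) ^ (k - 1) * (x ^ 2) ^ (k - 1) := by
        rw [Uu, hpow]
        gcongr
        · exact Cc_le_pow k
        · exact mul_le_of_le_one_right (by positivity) hx1
    _ = (2 * k * x ^ 2) ^ (k - 1) := (mul_pow _ _ _).symm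
    _ ≤ (1 / 4) ^ (k - 1) := by gcongr; linarith

lemma Uu_mul_sq {k : ℕ} (hk : 1 ≤ k) (x : ℝ) : Uu k x * x ^ 2 = Cc k * x ^ (2 * k + 1) := by
  rw [Uu, mul_assoc, ← pow_add]; congr 2; omega

lemma Hh_eq {k : ℕ} (hk : 1 ≤ k) (x : ℝ) : Hh k x = 1 - x - Uu k x * x ^ 2 := by
  rw [Hh, Uu_mul_sq hk]

lemma Dd_eq {k : ℕ} (hk : 1 ≤ k) (x : ℝ) :
    Dd k x = 1 - 2 * x - (7 + 8 * k) * x ^ 2 + 4 * Uu k x * x ^ 2 * Hh k x := by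
  rw [Dd, Pp, mul_assoc 4 (Uu k x), Uu_mul_sq hk]; ring

lemma hasDerivAt_Dd (k : ℕ) (x : ℝ) :
    HasDerivAt (Dd k) (-2 - 2 * (7 + 8 * k) * x + 4 * Cc k * ((2 * k + 1) * x ^ (2 * k) * Hh k x
      + x ^ (2 * k + 1) * (-1 - Cc k * ((2 * k + 1) * x ^ (2 * k))))) x := by
  have hpow : HasDerivAt (fun z : ℝ => z ^ (2 * k + 1)) ((2 * k + 1) * x ^ (2 * k)) x := by
    simpa using hasDerivAt_pow (2 * k + 1) x
  have hH : HasDerivAt (Hh k) (-1 - Cc k * ((2 * k + 1) * x ^ (2 * k))) x :=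
    ((hasDerivAt_id x).const_sub 1).sub (hpow.const_mul (Cc k))
  have hP : HasDerivAt (Pp k) (-2 - 2 * (7 + 8 * k) * x) x :=
    ((((hasDerivAt_id x).const_mul 2).const_sub 1).sub
      ((hasDerivAt_pow 2 x).const_mul (7 + 8 * (k : ℝ)))).congr_deriv (by simp; ring)
  have hD : Dd k = fun z => Pp k z + 4 * Cc k * (z ^ (2 * k + 1) * Hh k z) := by
    funext z; rw [Dd]; ring
  rw [hD]
  exact (hP.add ((hpow.mul hH).const_mul (4 * Cc k))).congr_deriv (by ring)

lemma psi_eq {k : ℕ} (hk : 1 ≤ k) (x : ℝ) :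
    psi k x = 2 * x + 2 * ((7 + 8 * k) * x ^ 2) + 4 * Uu k x * x ^ 3
      - 4 * Uu k x * ((2 * k + 1) * x ^ 2) * Hh k x
      + 4 * Uu k x ^ 2 * ((2 * k + 1) * x ^ 2) * x ^ 2 := by
  obtain ⟨n, rfl⟩ := Nat.exists_eq_add_of_le' hk
  rw [psi, (hasDerivAt_Dd _ x).deriv, Uu, show 2 * (n + 1) - 1 = 2 * n + 1 by omega]
  ring

namespace IsEta

variable {k : ℕ} {η : ℝ} (h : IsEta k η)
include h

lemma pos : 0 < η := h.1.1

lemma mul_sq_lt_one : (8 + 8 * k) * η ^ 2 < 1 := by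
  have hs : 0 < Real.sqrt (8 + 8 * k) := by positivity
  have hlt : η * Real.sqrt (8 + 8 * k) < 1 := by
    have := h.1.2
    rwa [lt_div_iff₀ hs] at this
  calc (8 + 8 * k) * η ^ 2 = (η * Real.sqrt (8 + 8 * k)) ^ 2 := by
        rw [mul_pow, Real.sq_sqrt (by positivity)]; ring
    _ < 1 := pow_lt_one₀ (mul_pos h.pos hs).le hlt two_ne_zero

lemma root_eq (hk : 1 ≤ k) : (7 + 8 * k) * η ^ 2 = 1 - 2 * η + 4 * Uu k η * η ^ 2 * Hh k η := by
  linear_combination -h.2.1 + Dd_eq hk η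

end IsEta

section Limits

variable {η : ℕ → ℝ} (hη : ∀ᶠ k in atTop, IsEta k (η k))
include hη

lemma tendsto_eta : Tendsto η atTop (𝓝 0) := by
  have hsqrt : Tendsto (fun k : ℕ => Real.sqrt (8 + 8 * k)) atTop atTop :=
    Real.tendsto_sqrt_atTop.comp (tendsto_atTop_add_const_left _ 8
      (tendsto_natCast_atTop_atTop.const_mul_atTop (by norm_num)))
  refine tendsto_of_tendsto_of_tendsto_of_le_of_le' tendsto_const_nhds
    ((tendsto_const_nhds (x := (1 : ℝ))).div_atTop hsqrt) ?_ ?_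
  · filter_upwards [hη] with k hk using hk.pos.le
  · filter_upwards [hη] with k hk using hk.1.2.le

lemma tendsto_Uu_eta : Tendsto (fun k => Uu k (η k)) atTop (𝓝 0) := by
  have hgeom : Tendsto (fun k : ℕ => (1 / 4 : ℝ) ^ (k - 1)) atTop (𝓝 0) :=
    (tendsto_pow_atTop_nhds_zero_of_lt_one (by norm_num) (by norm_num)).comp
      (tendsto_sub_atTop_nat 1)
  refine tendsto_of_tendsto_of_tendsto_of_le_of_le' tendsto_const_nhds hgeom ?_ ?_
  · filter_upwards [hη] with k hk using Uu_nonneg k hk.pos.le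
  · filter_upwards [hη, eventually_ge_atTop 1] with k hk hk1
    exact Uu_le_geom hk1 hk.pos.le (by nlinarith [hk.mul_sq_lt_one, sq_nonneg (η k)])

lemma tendsto_Hh_eta : Tendsto (fun k => Hh k (η k)) atTop (𝓝 1) := by
  have h := (tendsto_const_nhds (x := (1 : ℝ))).sub (tendsto_eta hη) |>.sub
    ((tendsto_Uu_eta hη).mul ((tendsto_eta hη).pow 2))
  refine (h.congr' ?_).mono_right (by norm_num)
  filter_upwards [eventually_ge_atTop 1] with k hk using (Hh_eq hk _).symm

lemma tendsto_mul_eta_sq : Tendsto (fun k : ℕ => (7 + 8 * k) * η k ^ 2) atTop (𝓝 1) := by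
  have h := ((tendsto_const_nhds (x := (1 : ℝ))).sub ((tendsto_eta hη).const_mul 2)).add
    ((((tendsto_Uu_eta hη).const_mul 4).mul ((tendsto_eta hη).pow 2)).mul (tendsto_Hh_eta hη))
  refine (h.congr' ?_).mono_right (by norm_num)
  filter_upwards [hη, eventually_ge_atTop 1] with k hk hk1 using (hk.root_eq hk1).symm

lemma tendsto_Gg_eta : Tendsto (fun k => Gg k (η k)) atTop (𝓝 2) := by
  have h := (tendsto_const_nhds (x := (2 : ℝ))).sub
    ((tendsto_Uu_eta hη).mul ((tendsto_Hh_eta hη).sub (tendsto_Uu_eta hη)))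
  exact h.mono_right (by norm_num)

lemma tendsto_psi_eta : Tendsto (fun k => psi k (η k)) atTop (𝓝 2) := by
  have hv : Tendsto (fun k : ℕ => (2 * k + 1) * η k ^ 2) atTop (𝓝 (1 / 4)) := by
    have h := ((tendsto_mul_eta_sq hη).sub (((tendsto_eta hη).pow 2).const_mul 3)).div_const 4
    refine (h.congr fun k => ?_).mono_right (by norm_num)
    ring
  have hu := tendsto_Uu_eta hη
  have hx := tendsto_eta hη
  have h := (((((hx.const_mul 2).add ((tendsto_mul_eta_sq hη).const_mul 2)).add
    ((hu.const_mul 4).mul (hx.pow 3))).sub (((hu.const_mul 4).mul hv).mul (tendsto_Hh_eta hη))).add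
    (((hu.pow 2).const_mul 4).mul hv |>.mul (hx.pow 2)))
  refine (h.congr' ?_).mono_right (by norm_num)
  filter_upwards [eventually_ge_atTop 1] with k hk using (psi_eq hk _).symm

end Limits

/-- `lim_{k→∞} g_k(η_k) = 2` and `lim_{k→∞} ψ_k(η_k) = 2`, where
`ψ_k(η_k) = −η_k·Δ_k′(η_k)` and `η_k` is the unique root of `Δ_k` in `(0, 1/√(8+8k))`. -/
theorem statement10 (η : ℕ → ℝ) (hη : ∀ k, 2 ≤ k → IsEta k (η k)) :
    Tendsto (fun k : ℕ => Gg k (η k)) atTop (nhds 2) ∧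
    Tendsto (fun k : ℕ => psi k (η k)) atTop (nhds 2) := by
  have hη' : ∀ᶠ k in atTop, IsEta k (η k) := eventually_atTop.2 ⟨2, hη⟩
  exact ⟨tendsto_Gg_eta hη', tendsto_psi_eta hη'⟩
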